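/- Let a ≥ 1 be an integer and let M_a = {(x,y) ∈ ℤ × ℤ : 0 ≤ y and y ≤ −a·x} be the monoid of integral points of the cone in ℝ² generated by (−1,a) and (−1,0). Let ζ ∈ ℂ be a primitive a-th root of unity and let σ be the ℂ-algebra automorphism of ℂ[X,Y] with σ(X) = ζX, σ(Y) = ζY. Then the ℂ-linear map from the monoid algebra ℂ[M_a] to ℂ[X,Y] sending the monomial z^{(x,y)} (for (x,y) ∈ M_a) to X^y·Y^{−a·x−y} is an injective ℂ-algebra homomorphism whose image is exactly the fixed subalgebra {f ∈ ℂ[X,Y] : σ(f) = f}. -/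

import Mathlib

/-!
The map sends `z^(x,y)` to the monomial with exponent vector `(y, -a x - y)`, of total degree
`-a x`. On `M_a` this exponent map is injective, and its image is the set of all exponent vectors
whose total degree is divisible by `a`. On the other hand `σ` multiplies a monomial of degree `k`
by `ζ ^ k`, so a polynomial is `σ`-invariant exactly when it is supported on such exponent vectors.
-/

open MvPolynomial

namespace MvPolynomial

variable {R ι F : Type*}

section CommSemiring

variable [CommSemiring R] [FunLike F (MvPolynomial ι R) (MvPolynomial ι R)]
  [AlgHomClass F R (MvPolynomial ι R) (MvPolynomial ι R)] {ζ : R} {φ : F}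

theorem map_monomial_of_map_X_eq_C_mul_X (hφ : ∀ i, φ (X i) = C ζ * X i)
    (d : ι →₀ ℕ) (c : R) : φ (monomial d c) = monomial d (ζ ^ d.degree * c) := by
  rw [monomial_eq, monomial_eq, map_mul, map_finsuppProd, Finsupp.degree_apply,
    ← Finset.prod_pow_eq_pow_sum, C_mul, map_prod, ← algebraMap_eq, AlgHomClass.commutes]
  simp only [map_pow, hφ, mul_pow, Finsupp.prod, Finset.prod_mul_distrib, algebraMap_eq]
  ring

theorem coeff_map_of_map_X_eq_C_mul_X (hφ : ∀ i, φ (X i) = C ζ * X i)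
    (f : MvPolynomial ι R) (d : ι →₀ ℕ) : coeff d (φ f) = ζ ^ d.degree * coeff d f := by
  classical
  induction f using MvPolynomial.induction_on' with
  | monomial e c =>
    rw [map_monomial_of_map_X_eq_C_mul_X hφ, coeff_monomial, coeff_monomial]
    split_ifs with h
    · rw [h]
    · rw [mul_zero]
  | add p q hp hq => rw [map_add, coeff_add, coeff_add, hp, hq, mul_add]

end CommSemiring

theorem map_eq_self_iff_dvd_degree [CommRing R] [IsDomain R]
    [FunLike F (MvPolynomial ι R) (MvPolynomial ι R)]
    [AlgHomClass F R (MvPolynomial ι R) (MvPolynomial ι R)] {ζ : R} {n : ℕ}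
    (hζ : IsPrimitiveRoot ζ n) {φ : F} (hφ : ∀ i, φ (X i) = C ζ * X i) (f : MvPolynomial ι R) :
    φ f = f ↔ ∀ d ∈ f.support, n ∣ d.degree := by
  simp only [MvPolynomial.ext_iff, coeff_map_of_map_X_eq_C_mul_X hφ, mem_support_iff,
    ← hζ.pow_eq_one_iff_dvd]
  refine forall_congr' fun d => ⟨fun h hd => ?_, fun h => ?_⟩
  · exact mul_right_cancel₀ hd (h.trans (one_mul _).symm)
  · by_cases hd : coeff d f = 0
    · rw [hd, mul_zero]
    · rw [h hd, one_mul]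

end MvPolynomial

namespace AddMonoidAlgebra

variable {R M N : Type*} [CommSemiring R]

theorem linearMap_eq_mapDomain (Φ : R[M] →ₗ[R] R[N]) (e : M → N)
    (h : ∀ m, Φ (single m 1) = single (e m) 1) : ⇑Φ = mapDomain e := by
  funext x
  induction x using AddMonoidAlgebra.induction_linear with
  | zero => simp
  | add x y hx hy => rw [map_add, mapDomain_add, hx, hy]
  | single m c =>
    rw [mapDomain_single, ← mul_one c, ← smul_eq_mul, ← smul_single, ← smul_single, map_smul, h]

theorem range_mapDomain {e : M → N} (he : Function.Injective e) :
    Set.range (mapDomain e : R[M] → R[N]) = {x | ↑x.coeff.support ⊆ Set.range e} := by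
  ext x
  refine ⟨?_, fun hx => ⟨comapDomain e he x, mapDomain_comapDomain hx he⟩⟩
  rintro ⟨y, rfl⟩
  classical
  refine (Finset.coe_subset.2 Finsupp.mapDomain_support).trans ?_
  rw [Finset.coe_image]
  exact Set.image_subset_range _ _

end AddMonoidAlgebra

def vertexCone (a : ℕ) : Set (ℤ × ℤ) := {p | 0 ≤ p.2 ∧ p.2 ≤ -(a * p.1)}

noncomputable def vertexConeExponent (a : ℕ) (p : ℤ × ℤ) : Fin 2 →₀ ℕ :=
  Finsupp.single 0 p.2.toNat + Finsupp.single 1 (-(a : ℤ) * p.1 - p.2).toNat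

theorem vertexConeExponent_apply_zero (a : ℕ) (p : ℤ × ℤ) :
    vertexConeExponent a p 0 = p.2.toNat := by
  simp [vertexConeExponent]

theorem vertexConeExponent_apply_one (a : ℕ) (p : ℤ × ℤ) :
    vertexConeExponent a p 1 = (-(a : ℤ) * p.1 - p.2).toNat := by
  simp [vertexConeExponent]

theorem X_pow_mul_X_pow_eq_monomial_vertexConeExponent {R : Type*} [CommSemiring R] (a : ℕ)
    (p : ℤ × ℤ) :
    (X 0 ^ p.2.toNat * X 1 ^ (-(a : ℤ) * p.1 - p.2).toNat : MvPolynomial (Fin 2) R) =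
      monomial (vertexConeExponent a p) 1 := by
  rw [X_pow_eq_monomial, X_pow_eq_monomial, monomial_mul, one_mul, vertexConeExponent]

theorem degree_vertexConeExponent {a : ℕ} {p : ℤ × ℤ} (hp : p ∈ vertexCone a) :
    ((vertexConeExponent a p).degree : ℤ) = a * -p.1 := by
  obtain ⟨h₁, h₂⟩ := hp
  simp only [vertexConeExponent, map_add, Finsupp.degree_single, neg_mul, mul_neg] at h₂ ⊢
  omega

theorem vertexConeExponent_injOn {a : ℕ} (ha : a ≠ 0) :
    Set.InjOn (vertexConeExponent a) (vertexCone a) := by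
  intro p ⟨hp₁, hp₂⟩ q ⟨hq₁, hq₂⟩ hpq
  have h₀ := congrArg (· 0) hpq
  have h₁ := congrArg (· 1) hpq
  simp only [vertexConeExponent_apply_zero, vertexConeExponent_apply_one, neg_mul] at h₀ h₁
  have hy : p.2 = q.2 := by omega
  have hax : (a : ℤ) * p.1 = a * q.1 := by omega
  exact Prod.ext (mul_left_cancel₀ (by exact_mod_cast ha) hax) hy

theorem vertexConeExponent_image (a : ℕ) :
    vertexConeExponent a '' vertexCone a = {d | a ∣ d.degree} := by
  ext d
  constructor
  · rintro ⟨p, hp, rfl⟩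
    exact Int.natCast_dvd_natCast.1 ⟨-p.1, degree_vertexConeExponent hp⟩
  · rintro ⟨k, hk⟩
    have hdeg : ((d 0 : ℕ) : ℤ) + (d 1 : ℕ) = a * (k : ℕ) := by
      rw [← Nat.cast_add, ← Fin.sum_univ_two, ← Finsupp.degree_eq_sum, hk, Nat.cast_mul]
    refine ⟨(-(k : ℤ), d 0), ⟨by simp, by simp only [mul_neg, neg_neg]; omega⟩, ?_⟩
    refine Finsupp.ext (Fin.forall_fin_two.2 ⟨by simp [vertexConeExponent_apply_zero], ?_⟩)
    simp only [vertexConeExponent_apply_one, neg_mul, mul_neg, neg_neg]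
    omega

/-- For `a ≥ 1`, the ℂ-algebra map from the monoid algebra of
`M_a = {(x,y) ∈ ℤ² : 0 ≤ y, y ≤ -a·x}` to `ℂ[X,Y]` sending `z^{(x,y)} ↦ X^y·Y^{-ax-y}`
is injective with image the fixed subalgebra of the diagonal `ℤ/a`-action `X ↦ ζX, Y ↦ ζY`. -/
theorem stmt_3 (a : ℕ) (ha : 1 ≤ a)
    (M : AddSubmonoid (ℤ × ℤ))
    (hM : ∀ p : ℤ × ℤ, p ∈ M ↔ 0 ≤ p.2 ∧ p.2 ≤ -((a : ℤ) * p.1))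
    (ζ : ℂ) (hζ : IsPrimitiveRoot ζ a)
    (σ : MvPolynomial (Fin 2) ℂ ≃ₐ[ℂ] MvPolynomial (Fin 2) ℂ)
    (hσX : σ (X 0) = C ζ * X 0) (hσY : σ (X 1) = C ζ * X 1)
    (Φ : AddMonoidAlgebra ℂ M →ₐ[ℂ] MvPolynomial (Fin 2) ℂ)
    (hΦ : ∀ m : M, Φ (AddMonoidAlgebra.single m 1) =
        X 0 ^ ((m : ℤ × ℤ).2.toNat) *
          X 1 ^ ((-(a : ℤ) * (m : ℤ × ℤ).1 - (m : ℤ × ℤ).2).toNat)) :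
    Function.Injective Φ ∧ Set.range Φ = {f : MvPolynomial (Fin 2) ℂ | σ f = f} := by
  have hM' : (M : Set (ℤ × ℤ)) = vertexCone a := Set.ext hM
  have hσ : ∀ i, σ (X i) = C ζ * X i := Fin.forall_fin_two.2 ⟨hσX, hσY⟩
  set e := (M : Set (ℤ × ℤ)).domRestrict (vertexConeExponent a) with he_def
  have he : Function.Injective e :=
    (hM' ▸ vertexConeExponent_injOn (Nat.one_le_iff_ne_zero.1 ha)).injective
  have hΦe : ⇑Φ = AddMonoidAlgebra.mapDomain e :=
    AddMonoidAlgebra.linearMap_eq_mapDomain Φ.toLinearMap e fun m => by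
      rw [AlgHom.toLinearMap_apply, hΦ, X_pow_mul_X_pow_eq_monomial_vertexConeExponent,
        single_eq_monomial]
      rfl
  refine ⟨hΦe ▸ AddMonoidAlgebra.mapDomain_injective he, ?_⟩
  rw [hΦe, AddMonoidAlgebra.range_mapDomain he, he_def, Set.range_domRestrict, hM',
    vertexConeExponent_image]
  ext f
  exact (map_eq_self_iff_dvd_degree hζ hσ f).symm
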